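/- The nonstandard linear-algebra face subgroup A^{33}_N = ⟨⋃_{j∈α_3}( Z̄^j_{j, j+n} ∪ Z̄^j_{j, j−|α_{12}|} )⟩ of Ker(Φ) is isomorphic, as a group, to (∏_{j∈α_3} A_j) × (∏_{j∈α_3} A_j) (that is, to (A_{α_3})²). -/

import Mathlib

namespace SB

/-- `cc n p` is the 0-based boundary of the `p`-th label sequence:
`cc n p = ⌈p·n/3⌉` for `p ≤ 3`, and `cc n p = n + ⌈(p-3)·n/3⌉` for `p ≥ 3`. -/
def cc (n p : ℕ) : ℕ := if p < 3 then (p * n + 2) / 3 else n + ((p - 3) * n + 2) / 3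

/-- The 0-based label sequence `α_{p+1}` (paper's `α_1,…,α_6` for `p = 0,…,5`)
as a finite set of coordinates in `Fin (2n)`. -/
def alphaF (n p : ℕ) : Finset (Fin (2 * n)) :=
  Finset.univ.filter (fun x => cc n p ≤ x.val ∧ x.val < cc n (p + 1))

/-- The 0-based label sequence `α_{t+1}` (for `t < 3`) as a finite set of
indices in `Fin n` (indexing the factors `A_j`). -/
def alphaN (n t : ℕ) : Finset (Fin n) :=
  Finset.univ.filter (fun x => cc n t ≤ x.val ∧ x.val < cc n (t + 1))

/-- Reduction of a natural number modulo `2n`, as an element of `Fin (2n)`. -/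
def idx {n : ℕ} (hn : 0 < n) (k : ℕ) : Fin (2 * n) := ⟨k % (2 * n), Nat.mod_lt _ (by omega)⟩

/-- Reduction of a natural number modulo `n`, as an element of `Fin n`
(this implements the paper's `j*`). -/
def idxN {n : ℕ} (hn : 0 < n) (k : ℕ) : Fin n := ⟨k % n, Nat.mod_lt _ hn⟩

/-- The set `Ȳ_i` of vectorized kernel generators: `y ∈ Y i` placed in
coordinate `i` with identity elsewhere. -/
def Ybar {n : ℕ} {G : Fin (2 * n) → Type} [∀ i, Group (G i)]
    (Y : ∀ i, Set (G i)) (i : Fin (2 * n)) : Set (∀ i', G i') :=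
  Pi.mulSingle i '' (Y i)

/-- The set `Z̄^j_{i,k}` of vectorized section generators: for `b ∈ A j`, the
element with `s j i b` in coordinate `i`, `s j k b⁻¹` in coordinate `k`, and
identity elsewhere. -/
def Zbar {n : ℕ} {A : Fin n → Type} [∀ j, CommGroup (A j)]
    {G : Fin (2 * n) → Type} [∀ i, Group (G i)]
    (s : ∀ (j : Fin n) (i : Fin (2 * n)), A j →* G i)
    (j : Fin n) (i k : Fin (2 * n)) : Set (∀ i', G i') :=
  Set.range (fun b : A j => Pi.mulSingle i (s j i b) * Pi.mulSingle k (s j k b⁻¹))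

/-!
The generators `z̄^j_{j,j+n}(β)` and `z̄^j_{j,j-|α₁₂|}(β)` are the images of `(e_j β, 1)` and
`(1, e_j β)` under the map `(A_{α₃})² → G` sending `(p, q)` to the element with `s(p_j q_j)` in
coordinate `j`, `s(p_j)⁻¹` in coordinate `j + n` and `s(q_j)⁻¹` in coordinate `j - |α₁₂|`.
These three families of coordinates are pairwise disjoint, so the map is a homomorphism (the `A_j`
are abelian), and it is injective because `φ ∘ s = id` makes every section injective.
-/

section Slots

variable {ι J : Type*} {G : ι → Type*} {a b c : J → ι}

theorem pi_ext_slots {g h : ∀ i, G i} (ha : ∀ j, g (a j) = h (a j)) (hb : ∀ j, g (b j) = h (b j))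
    (hc : ∀ j, g (c j) = h (c j))
    (hout : ∀ i, (∀ j, a j ≠ i) → (∀ j, b j ≠ i) → (∀ j, c j ≠ i) → g i = h i) : g = h := by
  funext i
  by_cases hai : ∃ j, a j = i
  · obtain ⟨j, rfl⟩ := hai; exact ha j
  by_cases hbi : ∃ j, b j = i
  · obtain ⟨j, rfl⟩ := hbi; exact hb j
  by_cases hci : ∃ j, c j = i
  · obtain ⟨j, rfl⟩ := hci; exact hc j
  exact hout i (fun j h => hai ⟨j, h⟩) (fun j h => hbi ⟨j, h⟩) (fun j h => hci ⟨j, h⟩)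

theorem mulSingle_apply_of_injective {A : J → Type*} [∀ j, MulOneClass (A j)]
    [∀ i, MulOneClass (G i)] [DecidableEq J] [DecidableEq ι] {f : J → ι}
    (hf : Function.Injective f) (t : ∀ j, A j →* G (f j)) (j k : J) (x : A j) :
    Pi.mulSingle (f j) (t j x) (f k) = t k (Pi.mulSingle j x k) := by
  by_cases hkj : k = j
  · subst hkj
    simp
  · rw [Pi.mulSingle_eq_of_ne (hf.ne hkj), Pi.mulSingle_eq_of_ne hkj, map_one]

end Slots

section PairedSections

variable {ι J : Type*} {A : J → Type*} [∀ j, CommGroup (A j)] {G : ι → Type*} [∀ i, Group (G i)]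
  (s : ∀ j i, A j →* G i) {a b c : J → ι}

open Classical in
/-- The element with `s (p j * q j)` at `a j`, `s (p j)⁻¹` at `b j`, `s (q j)⁻¹` at `c j`,
and `1` elsewhere. -/
noncomputable def pairedSectionHom (a b c : J → ι) : (∀ j, A j) × (∀ j, A j) →* ∀ i, G i :=
  MonoidHom.pi fun i =>
    if h : ∃ j, a j = i then
      (s h.choose i).comp
        ((Pi.evalMonoidHom A h.choose).comp (MonoidHom.fst _ _ * MonoidHom.snd _ _))
    else if h : ∃ j, b j = i then
      (s h.choose i).comp ((Pi.evalMonoidHom A h.choose).comp (MonoidHom.fst _ _)⁻¹)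
    else if h : ∃ j, c j = i then
      (s h.choose i).comp ((Pi.evalMonoidHom A h.choose).comp (MonoidHom.snd _ _)⁻¹)
    else 1

variable (p q : ∀ j, A j) (j : J)

theorem pairedSectionHom_apply_left (hslots : Function.Injective (Sum.elim a (Sum.elim b c))) :
    pairedSectionHom s a b c (p, q) (a j) = s j (a j) (p j * q j) := by
  have h : ∃ j', a j' = a j := ⟨j, rfl⟩
  have hj : h.choose = j := Sum.inl_injective (@hslots (.inl _) (.inl j) h.choose_spec)
  simp only [pairedSectionHom, MonoidHom.pi_apply, dif_pos h]
  rw [hj]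
  rfl

theorem pairedSectionHom_apply_middle (hslots : Function.Injective (Sum.elim a (Sum.elim b c))) :
    pairedSectionHom s a b c (p, q) (b j) = s j (b j) (p j)⁻¹ := by
  have ha : ¬∃ j', a j' = b j := fun ⟨_, h⟩ => Sum.inl_ne_inr (@hslots (.inl _) (.inr (.inl j)) h)
  have h : ∃ j', b j' = b j := ⟨j, rfl⟩
  have hj : h.choose = j :=
    Sum.inl_injective (Sum.inr_injective (@hslots (.inr (.inl _)) (.inr (.inl j)) h.choose_spec))
  simp only [pairedSectionHom, MonoidHom.pi_apply, dif_neg ha, dif_pos h]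
  rw [hj]
  rfl

theorem pairedSectionHom_apply_right (hslots : Function.Injective (Sum.elim a (Sum.elim b c))) :
    pairedSectionHom s a b c (p, q) (c j) = s j (c j) (q j)⁻¹ := by
  have ha : ¬∃ j', a j' = c j := fun ⟨_, h⟩ => Sum.inl_ne_inr (@hslots (.inl _) (.inr (.inr j)) h)
  have hb : ¬∃ j', b j' = c j := fun ⟨_, h⟩ =>
    Sum.inl_ne_inr (Sum.inr_injective (@hslots (.inr (.inl _)) (.inr (.inr j)) h))
  have h : ∃ j', c j' = c j := ⟨j, rfl⟩
  have hj : h.choose = j :=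
    Sum.inr_injective (Sum.inr_injective (@hslots (.inr (.inr _)) (.inr (.inr j)) h.choose_spec))
  simp only [pairedSectionHom, MonoidHom.pi_apply, dif_neg ha, dif_neg hb, dif_pos h]
  rw [hj]
  rfl

theorem pairedSectionHom_apply_of_notMem {i : ι} (ha : ∀ j, a j ≠ i) (hb : ∀ j, b j ≠ i)
    (hc : ∀ j, c j ≠ i) : pairedSectionHom s a b c (p, q) i = 1 := by
  simp [pairedSectionHom, ha, hb, hc]

theorem pairedSectionHom_injective (hslots : Function.Injective (Sum.elim a (Sum.elim b c)))
    (hs : ∀ j i, Function.Injective (s j i)) : Function.Injective (pairedSectionHom s a b c) := by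
  rw [injective_iff_map_eq_one]
  rintro ⟨p, q⟩ h
  have hp : ∀ j, p j = 1 := fun j => by
    have hj := congr_fun h (b j)
    rw [pairedSectionHom_apply_middle s _ _ _ hslots, Pi.one_apply, map_eq_one_iff _ (hs _ _)] at hj
    exact inv_eq_one.1 hj
  have hq : ∀ j, q j = 1 := fun j => by
    have hj := congr_fun h (c j)
    rw [pairedSectionHom_apply_right s _ _ _ hslots, Pi.one_apply, map_eq_one_iff _ (hs _ _)] at hj
    exact inv_eq_one.1 hj
  exact Prod.ext (funext hp) (funext hq)

variable [DecidableEq J] [DecidableEq ι]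

theorem pairedSectionHom_mulSingle_fst (hslots : Function.Injective (Sum.elim a (Sum.elim b c)))
    (x : A j) :
    pairedSectionHom s a b c (Pi.mulSingle j x, 1)
      = Pi.mulSingle (a j) (s j (a j) x) * Pi.mulSingle (b j) (s j (b j) x⁻¹) := by
  obtain ⟨ha, hbc_inj, habc⟩ := Sum.elim_injective.1 hslots
  obtain ⟨hb, -, hbc⟩ := Sum.elim_injective.1 hbc_inj
  have hab : ∀ j k, a j ≠ b k := fun j k => habc j (.inl k)
  have hac : ∀ j k, a j ≠ c k := fun j k => habc j (.inr k)
  refine pi_ext_slots (a := a) (b := b) (c := c) (fun k => ?_) (fun k => ?_) (fun k => ?_) ?_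
  · rw [pairedSectionHom_apply_left s _ _ _ hslots, Pi.mul_apply,
      mulSingle_apply_of_injective ha (fun k => s k (a k)),
      Pi.mulSingle_eq_of_ne (hab k j), Pi.one_apply, mul_one, mul_one]
  · rw [pairedSectionHom_apply_middle s _ _ _ hslots, Pi.mul_apply,
      Pi.mulSingle_eq_of_ne (hab j k).symm, one_mul,
      mulSingle_apply_of_injective hb (fun k => s k (b k)), Pi.mulSingle_inv, Pi.inv_apply]
  · rw [pairedSectionHom_apply_right s _ _ _ hslots, Pi.mul_apply,
      Pi.mulSingle_eq_of_ne (hac j k).symm, Pi.mulSingle_eq_of_ne (hbc j k).symm, Pi.one_apply,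
      inv_one, map_one, one_mul]
  · intro i hai hbi hci
    rw [pairedSectionHom_apply_of_notMem s _ _ hai hbi hci, Pi.mul_apply,
      Pi.mulSingle_eq_of_ne (hai j).symm, Pi.mulSingle_eq_of_ne (hbi j).symm, mul_one]

theorem pairedSectionHom_mulSingle_snd (hslots : Function.Injective (Sum.elim a (Sum.elim b c)))
    (x : A j) :
    pairedSectionHom s a b c (1, Pi.mulSingle j x)
      = Pi.mulSingle (a j) (s j (a j) x) * Pi.mulSingle (c j) (s j (c j) x⁻¹) := by
  obtain ⟨ha, hbc_inj, habc⟩ := Sum.elim_injective.1 hslots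
  obtain ⟨-, hc, hbc⟩ := Sum.elim_injective.1 hbc_inj
  have hab : ∀ j k, a j ≠ b k := fun j k => habc j (.inl k)
  have hac : ∀ j k, a j ≠ c k := fun j k => habc j (.inr k)
  refine pi_ext_slots (a := a) (b := b) (c := c) (fun k => ?_) (fun k => ?_) (fun k => ?_) ?_
  · rw [pairedSectionHom_apply_left s _ _ _ hslots, Pi.mul_apply,
      mulSingle_apply_of_injective ha (fun k => s k (a k)),
      Pi.mulSingle_eq_of_ne (hac k j), Pi.one_apply, one_mul, mul_one]
  · rw [pairedSectionHom_apply_middle s _ _ _ hslots, Pi.mul_apply,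
      Pi.mulSingle_eq_of_ne (hab j k).symm, Pi.mulSingle_eq_of_ne (hbc k j), Pi.one_apply,
      inv_one, map_one, one_mul]
  · rw [pairedSectionHom_apply_right s _ _ _ hslots, Pi.mul_apply,
      Pi.mulSingle_eq_of_ne (hac j k).symm, one_mul,
      mulSingle_apply_of_injective hc (fun k => s k (c k)), Pi.mulSingle_inv, Pi.inv_apply]
  · intro i hai hbi hci
    rw [pairedSectionHom_apply_of_notMem s _ _ hai hbi hci, Pi.mul_apply,
      Pi.mulSingle_eq_of_ne (hai j).symm, Pi.mulSingle_eq_of_ne (hci j).symm, mul_one]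

theorem range_pairedSectionHom [Finite J]
    (hslots : Function.Injective (Sum.elim a (Sum.elim b c))) :
    (pairedSectionHom s a b c).range = Subgroup.closure (⋃ j,
      Set.range (fun x : A j =>
          Pi.mulSingle (a j) (s j (a j) x) * Pi.mulSingle (b j) (s j (b j) x⁻¹))
        ∪ Set.range (fun x : A j =>
          Pi.mulSingle (a j) (s j (a j) x) * Pi.mulSingle (c j) (s j (c j) x⁻¹))) := by
  apply le_antisymm
  · rintro _ ⟨⟨p, q⟩, rfl⟩
    rw [show (p, q) = (p, 1) * (1, q) by simp, map_mul]
    refine mul_mem ?_ ?_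
    · refine Subgroup.pi_mem_of_mulSingle_mem (H := (Subgroup.closure _).comap
        ((pairedSectionHom s a b c).comp (MonoidHom.inl _ _))) p fun j => Subgroup.subset_closure ?_
      exact Set.mem_iUnion.2 ⟨j, .inl ⟨p j, (pairedSectionHom_mulSingle_fst s j hslots _).symm⟩⟩
    · refine Subgroup.pi_mem_of_mulSingle_mem (H := (Subgroup.closure _).comap
        ((pairedSectionHom s a b c).comp (MonoidHom.inr _ _))) q fun j => Subgroup.subset_closure ?_
      exact Set.mem_iUnion.2 ⟨j, .inr ⟨q j, (pairedSectionHom_mulSingle_snd s j hslots _).symm⟩⟩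
  · rw [Subgroup.closure_le]
    simp only [Set.iUnion_subset_iff, Set.union_subset_iff, Set.range_subset_iff]
    exact fun j => ⟨fun x => ⟨_, pairedSectionHom_mulSingle_fst s j hslots x⟩,
      fun x => ⟨_, pairedSectionHom_mulSingle_snd s j hslots x⟩⟩

end PairedSections

theorem cc_two_bounds {n : ℕ} (hn : 3 ≤ n) : n ≤ 2 * cc n 2 ∧ cc n 2 < n := by
  have hcc : cc n 2 = (2 * n + 2) / 3 := rfl
  omega

theorem le_of_mem_alphaN_two {n : ℕ} {j : Fin n} (hj : j ∈ alphaN n 2) : cc n 2 ≤ j.val :=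
  (Finset.mem_filter.1 hj).2.1

theorem idx_val_of_lt {n : ℕ} (hn : 0 < n) {k : ℕ} (hk : k < 2 * n) : (idx hn k).val = k :=
  Nat.mod_eq_of_lt hk

-- For `j ∈ α₃`: `j - |α₁₂| < n - |α₁₂| ≤ |α₁₂| ≤ j < n ≤ j + n < 2n`.
theorem alphaN_two_slots_injective {n : ℕ} (hn : 3 ≤ n) (h0 : 0 < n) :
    Function.Injective (Sum.elim (fun j : alphaN n 2 => idx h0 j.1.val)
      (Sum.elim (fun j : alphaN n 2 => idx h0 (j.1.val + n))
        (fun j : alphaN n 2 => idx h0 (j.1.val - cc n 2)))) := by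
  have hcc := cc_two_bounds hn
  rintro (⟨j, hj⟩ | ⟨j, hj⟩ | ⟨j, hj⟩) (⟨k, hk⟩ | ⟨k, hk⟩ | ⟨k, hk⟩) h <;>
  · have hjn := j.isLt
    have hkn := k.isLt
    have hjc := le_of_mem_alphaN_two hj
    have hkc := le_of_mem_alphaN_two hk
    have hval := congrArg Fin.val h
    simp only [Sum.elim_inl, Sum.elim_inr] at hval
    rw [idx_val_of_lt _ (by omega), idx_val_of_lt _ (by omega)] at hval
    simp only [Sum.inl.injEq, Sum.inr.injEq, reduceCtorEq, Subtype.mk.injEq, Fin.ext_iff]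
    omega

theorem stmt_9
    (n : ℕ) (hn : 3 ≤ n)
    (A : Fin n → Type) [∀ j, CommGroup (A j)]
    (G : Fin (2 * n) → Type) [∀ i, Group (G i)]
    (φ : ∀ i, G i →* (∀ j, A j))
    (s : ∀ (j : Fin n) (i : Fin (2 * n)), A j →* G i)
    (hs : ∀ j i a, φ i (s j i a) j = a)
    :
    Nonempty
      (↥(Subgroup.closure (⋃ j ∈ alphaN n 2,
            (Zbar s j (idx (by omega : 0 < n) j.val) (idx (by omega : 0 < n) (j.val + n))
              ∪ Zbar s j (idx (by omega : 0 < n) j.val)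
                  (idx (by omega : 0 < n) (j.val - cc n 2)))))
        ≃* ((∀ j : ↥(alphaN n 2), A j.1) × (∀ j : ↥(alphaN n 2), A j.1))) := by
  have h0 : 0 < n := by omega
  have hslots := alphaN_two_slots_injective hn h0
  have hs_inj : ∀ (j : alphaN n 2) i, Function.Injective (s j.1 i) := fun j i =>
    Function.LeftInverse.injective (g := fun g => φ i g j.1) (hs j.1 i)
  have hrange := range_pairedSectionHom (A := fun j : alphaN n 2 => A j.1) (fun j => s j.1) hslots
  rw [Set.iUnion_subtype] at hrange
  exact ⟨(MulEquiv.subgroupCongr hrange).symm.trans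
    (MonoidHom.ofInjective (pairedSectionHom_injective _ hslots hs_inj)).symm⟩

end SB
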